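/- Let G be an r-cop-win graph (r ∈ {0,1}) with finite corner rank α ≥ 2. Then G is cop-win and capt(G) ≤ α − r. -/
import Mathlib


open Classical

/-- A finite reflexive graph: adjacency is symmetric and every vertex is
adjacent to itself (closed neighborhood `N[v] = {u | Adj v u}`). -/
structure RefGraph (V : Type*) where
  Adj : V → V → Prop
  symm : ∀ u v, Adj u v → Adj v u
  refl : ∀ v, Adj v v

namespace RefGraph

variable {V : Type*}

/-- `w` strictly corners `v` within the induced subgraph on `S`,
i.e. `N_S[v] ⊊ N_S[w]`. -/
def StrictCornersIn (G : RefGraph V) (S : Set V) (w v : V) : Prop :=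
  w ∈ S ∧ v ∈ S ∧ (∀ u ∈ S, G.Adj v u → G.Adj w u) ∧ ∃ u ∈ S, G.Adj w u ∧ ¬ G.Adj v u

/-- `v` is a strict corner of the induced subgraph on `S`. -/
def IsStrictCorner (G : RefGraph V) (S : Set V) (v : V) : Prop :=
  ∃ w, G.StrictCornersIn S w v

/-- `S` induces a clique. -/
def IsCliqueSet (G : RefGraph V) (S : Set V) : Prop :=
  ∀ u ∈ S, ∀ v ∈ S, G.Adj u v

/-- `lvl k` is the vertex set of the graph `G_{k+1}` of the corner ranking
procedure: start with all vertices and repeatedly delete all strict corners. -/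
def lvl (G : RefGraph V) : ℕ → Set V
  | 0 => Set.univ
  | k + 1 => {v ∈ G.lvl k | ¬ G.IsStrictCorner (G.lvl k) v}

/-- The corner rank of a vertex: the stage (1-indexed) at which it is a strict
corner, or at which the remaining graph is a clique; `∞` if neither ever occurs. -/
noncomputable def cr (G : RefGraph V) (v : V) : ℕ∞ :=
  sInf {n : ℕ∞ | ∃ m : ℕ, n = (m : ℕ∞) + 1 ∧ v ∈ G.lvl m ∧
    (G.IsStrictCorner (G.lvl m) v ∨ G.IsCliqueSet (G.lvl m))}

/-- The vertex set of `Gₖ`: the vertices of corner rank at least `k`. -/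
def GkSet (G : RefGraph V) (k : ℕ) : Set V := {v | (k : ℕ∞) ≤ G.cr v}

/-- The corner rank of the graph: the largest corner rank of a vertex. -/
noncomputable def crGraph (G : RefGraph V) [Fintype V] : ℕ∞ :=
  Finset.univ.sup fun v => G.cr v

/-- The projection map `fₖ` on a single vertex `u` of `Gₖ`. -/
noncomputable def fk (G : RefGraph V) (k : ℕ) (u : V) : Set V :=
  if (k : ℕ∞) < G.cr u then {u}
  else {w | w ∈ G.GkSet (k + 1) ∧ G.StrictCornersIn (G.GkSet k) w u}

/-- The projection map `Fₖ`: `F₁` is the identity and `Fₖ₊₁ = fₖ ∘ Fₖ`. -/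
noncomputable def Fk (G : RefGraph V) : ℕ → V → Set V
  | 0, v => {v}
  | 1, v => {v}
  | k + 2, v => ⋃ u ∈ G.Fk (k + 1) v, G.fk (k + 1) u

/-- `r` is `k`-cornered by `c`: for `k = 0`, `c = r`; for `k ≥ 1`, some
`r' ∈ Fₖ(r)` is cornered by `c` in the subgraph induced by `V(Gₖ) ∪ {c}`. -/
def kCornered (G : RefGraph V) : ℕ → V → V → Prop
  | 0, c, r => c = r
  | k + 1, c, r => ∃ r' ∈ G.Fk (k + 1) r,
      ∀ u, (u ∈ G.GkSet (k + 1) ∨ u = c) → G.Adj r' u → G.Adj c u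

/-- With the cop at `c`, the vertex `r` is `k`-proj-safe: `cr r ≥ k` and some
`c' ∈ Fₖ(c)` is not adjacent to `r`. -/
def ProjSafe (G : RefGraph V) (k : ℕ) (c r : V) : Prop :=
  (k : ℕ∞) ≤ G.cr r ∧ ∃ c' ∈ G.Fk k c, ¬ G.Adj c' r

/-- The cop at `c` can win within `k` cop moves against the robber at `r`,
robber to move. -/
def WinWithin (G : RefGraph V) : ℕ → V → V → Prop
  | 0, c, r => c = r
  | k + 1, c, r => c = r ∨ ∀ r₁, G.Adj r r₁ → ∃ c₁, G.Adj c c₁ ∧ G.WinWithin k c₁ r₁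

/-- The cop at `c` can guarantee catching the robber at `r` within `n` cop
moves, cop to move. -/
def CanCatch (G : RefGraph V) : ℕ → V → V → Prop
  | 0, c, r => c = r
  | n + 1, c, r => c = r ∨ ∃ c', G.Adj c c' ∧
      (c' = r ∨ ∀ r', G.Adj r r' → G.CanCatch n c' r')

/-- The cop has a winning strategy: some initial placement from which she can
guarantee capture in some bounded number of moves, whatever the robber does. -/
def CopWin (G : RefGraph V) : Prop :=
  ∃ (n : ℕ) (c₀ : V), ∀ r₀ : V, G.CanCatch n c₀ r₀

/-- The capture time: the least `n` such that the cop has an initial placement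
guaranteeing capture within `n` cop moves. -/
noncomputable def capt (G : RefGraph V) : ℕ :=
  sInf {n : ℕ | ∃ c₀ : V, ∀ r₀ : V, G.CanCatch n c₀ r₀}

/-- A graph of finite corner rank `α` is `1`-cop-win if some vertex of corner
rank `α` is adjacent to every vertex of `G_{α-1}`. -/
def OneCopWin (G : RefGraph V) (α : ℕ) : Prop :=
  ∃ x, G.cr x = (α : ℕ∞) ∧ ∀ u, ((α - 1 : ℕ) : ℕ∞) ≤ G.cr u → G.Adj x u

/-- `r`-cop-win for `r ∈ {0,1}`. -/
def RCopWin (G : RefGraph V) (r α : ℕ) : Prop :=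
  (r = 1 ∧ G.OneCopWin α) ∨ (r = 0 ∧ ¬ G.OneCopWin α)

/-- The largest finite corner rank occurring in `G` (0 if none occurs). -/
noncomputable def gammaMax (G : RefGraph V) : ℕ :=
  sSup {n : ℕ | ∃ v, G.cr v = (n : ℕ∞)}

/-- `F_∞`: equal to `F_{γ+1}` where `γ` is the largest finite corner rank, and
the identity (`F₁`) when no vertex has finite corner rank. -/
noncomputable def Finf (G : RefGraph V) : V → Set V :=
  G.Fk (G.gammaMax + 1)

/-- `e` lists the vertices as a dismantling ordering: every vertex except the
last is cornered, in the induced subgraph on it and the later vertices, by some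
later vertex. -/
def IsDismantlingOrdering (G : RefGraph V) {n : ℕ} (e : Fin n ≃ V) : Prop :=
  ∀ i : Fin n, (i : ℕ) + 1 < n →
    ∃ j : Fin n, i < j ∧ e j ≠ e i ∧
      ∀ u, (∃ m : Fin n, i ≤ m ∧ e m = u) → G.Adj (e i) u → G.Adj (e j) u

/-- `G` has a dismantling ordering. -/
def HasDismantling (G : RefGraph V) [Fintype V] : Prop :=
  ∃ e : Fin (Fintype.card V) ≃ V, G.IsDismantlingOrdering e

end RefGraph
namespace RefGraph

variable {V : Type*} (G : RefGraph V)

lemma one_le_cr (v : V) : 1 ≤ G.cr v := by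
  refine le_sInf ?_
  rintro n ⟨m, rfl, -⟩
  exact le_add_self

lemma mem_GkSet_one (v : V) : v ∈ G.GkSet 1 := by
  show ((1 : ℕ) : ℕ∞) ≤ G.cr v
  exact_mod_cast G.one_le_cr v

lemma GkSet_succ_subset (k : ℕ) : G.GkSet (k + 1) ⊆ G.GkSet k := fun v hv =>
  le_trans (show ((k : ℕ) : ℕ∞) ≤ ((k + 1 : ℕ) : ℕ∞) by exact_mod_cast Nat.le_succ k) hv

/-- The stopping condition at stage `m`. -/
abbrev CondAt (v : V) (m : ℕ) : Prop :=
  v ∈ G.lvl m ∧ (G.IsStrictCorner (G.lvl m) v ∨ G.IsCliqueSet (G.lvl m))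

lemma cr_le_of_condAt {v : V} {m : ℕ} (h : G.CondAt v m) : G.cr v ≤ (m : ℕ∞) + 1 :=
  sInf_le ⟨m, rfl, h.1, h.2⟩

lemma exists_condAt_of_cr_lt {v : V} {b : ℕ∞} (h : G.cr v < b) :
    ∃ i : ℕ, ((i : ℕ∞) + 1 < b) ∧ G.CondAt v i := by
  rw [cr] at h
  obtain ⟨a, ⟨i, rfl, h1, h2⟩, hab⟩ := sInf_lt_iff.mp h
  exact ⟨i, hab, h1, h2⟩

lemma lvl_subset : ∀ {i j : ℕ}, i ≤ j → G.lvl j ⊆ G.lvl i := by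
  intro i j h
  induction j with
  | zero => simp_all
  | succ j ih =>
    rcases Nat.lt_or_ge i (j + 1) with h' | h'
    · exact fun v hv => ih (by omega) hv.1
    · have : i = j + 1 := by omega
      subst this; exact fun v hv => hv

lemma mem_lvl_of_cr_ge {v : V} : ∀ m : ℕ, ((m : ℕ∞) + 1 ≤ G.cr v) → v ∈ G.lvl m := by
  intro m
  induction m with
  | zero => intro _; exact Set.mem_univ v
  | succ m ih =>
    intro h
    have hm : (m : ℕ∞) + 1 ≤ G.cr v := by
      refine le_trans ?_ h
      have : ((m + 1 : ℕ) : ℕ∞) ≤ ((m + 2 : ℕ) : ℕ∞) := by exact_mod_cast by omega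
      push_cast at this
      exact this
    have hmem := ih hm
    refine ⟨hmem, fun hc => ?_⟩
    have hle := G.cr_le_of_condAt ⟨hmem, Or.inl hc⟩
    have h2 : ((m : ℕ∞) + 1) + 1 ≤ (m : ℕ∞) + 1 := le_trans h hle
    have h3 : ((m + 2 : ℕ) : ℕ∞) ≤ ((m + 1 : ℕ) : ℕ∞) := by push_cast; push_cast at h2; exact h2
    have h4 : (m + 2 : ℕ) ≤ m + 1 := by exact_mod_cast h3
    omega

lemma exists_corner_of_not_mem_lvl {v : V} :
    ∀ m : ℕ, v ∉ G.lvl m → ∃ i < m, v ∈ G.lvl i ∧ G.IsStrictCorner (G.lvl i) v := by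
  intro m
  induction m with
  | zero => intro h; exact absurd (Set.mem_univ v) h
  | succ m ih =>
    intro h
    by_cases hm : v ∈ G.lvl m
    · have hc : G.IsStrictCorner (G.lvl m) v := by
        by_contra hc; exact h ⟨hm, hc⟩
      exact ⟨m, by omega, hm, hc⟩
    · obtain ⟨i, hi, h1, h2⟩ := ih hm
      exact ⟨i, by omega, h1, h2⟩

lemma GkSet_succ_eq_lvl {m : ℕ} (hnc : ∀ j < m, ¬ G.IsCliqueSet (G.lvl j)) :
    G.GkSet (m + 1) = G.lvl m := by
  ext v
  constructor
  · intro hv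
    refine G.mem_lvl_of_cr_ge m ?_
    have h1 : ((m + 1 : ℕ) : ℕ∞) ≤ G.cr v := hv
    push_cast at h1; exact h1
  · intro hv
    by_contra hcr
    have hlt : G.cr v < (m : ℕ∞) + 1 := by
      have h1 : ¬ ((m + 1 : ℕ) : ℕ∞) ≤ G.cr v := hcr
      push_cast at h1
      exact lt_of_not_ge h1
    obtain ⟨i, hi, h1, h2⟩ := G.exists_condAt_of_cr_lt hlt
    have him : i < m := by
      have h3 : ((i + 1 : ℕ) : ℕ∞) < ((m + 1 : ℕ) : ℕ∞) := by push_cast; push_cast at hi; exact hi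
      have h4 : (i + 1 : ℕ) < m + 1 := by exact_mod_cast h3
      omega
    rcases h2 with hcor | hclq
    · have hv' : v ∈ G.lvl (i + 1) := G.lvl_subset (by omega) hv
      exact hv'.2 hcor
    · exact hnc i him hclq

lemma no_clique_of_lt {α : ℕ} (hub : ∀ v, G.cr v ≤ (α : ℕ∞)) {w : V}
    (hw : G.cr w = (α : ℕ∞)) :
    ∀ j, j + 1 < α → ¬ G.IsCliqueSet (G.lvl j) := by
  intro j hj hcl
  have hle : G.cr w ≤ (j : ℕ∞) + 1 := by
    by_cases hmem : w ∈ G.lvl j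
    · exact G.cr_le_of_condAt ⟨hmem, Or.inr hcl⟩
    · obtain ⟨i, hi, hmi, hci⟩ := G.exists_corner_of_not_mem_lvl j hmem
      refine le_trans (G.cr_le_of_condAt ⟨hmi, Or.inl hci⟩) ?_
      have h1 : ((i + 1 : ℕ) : ℕ∞) ≤ ((j + 1 : ℕ) : ℕ∞) := by exact_mod_cast by omega
      push_cast at h1; exact h1
  rw [hw] at hle
  have h2 : ((α : ℕ) : ℕ∞) ≤ ((j + 1 : ℕ) : ℕ∞) := by push_cast; exact hle
  have h3 : α ≤ j + 1 := by exact_mod_cast h2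
  omega

section Fintype

variable [Fintype V]

lemma exists_not_cornered_superset {S : Set V} {v : V} (h : G.IsStrictCorner S v) :
    ∃ w, G.StrictCornersIn S w v ∧ ¬ G.IsStrictCorner S w := by
  classical
  set f : V → ℕ := fun x => (Finset.univ.filter (fun u => u ∈ S ∧ G.Adj x u)).card with hf
  set T : Finset V := Finset.univ.filter (fun x => G.StrictCornersIn S x v) with hT
  obtain ⟨w0, hw0⟩ := h
  have hTne : T.Nonempty := ⟨w0, by rw [hT, Finset.mem_filter]; exact ⟨Finset.mem_univ _, hw0⟩⟩
  obtain ⟨w, hwT, hmax⟩ := T.exists_max_image f hTne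
  have hwv : G.StrictCornersIn S w v := by
    have h1 := hwT; rw [hT, Finset.mem_filter] at h1; exact h1.2
  refine ⟨w, hwv, ?_⟩
  rintro ⟨w', hw'⟩
  obtain ⟨hw'S, hwS, hsub, u1, hu1S, hu1a, hu1n⟩ := hw'
  obtain ⟨-, hvS, hsubv, u0, hu0S, hu0a, hu0n⟩ := hwv
  have hw'v : G.StrictCornersIn S w' v :=
    ⟨hw'S, hvS, fun u hu ha => hsub u hu (hsubv u hu ha), u0, hu0S, hsub u0 hu0S hu0a, hu0n⟩
  have hmem : w' ∈ T := by rw [hT, Finset.mem_filter]; exact ⟨Finset.mem_univ _, hw'v⟩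
  have hle : f w' ≤ f w := hmax w' hmem
  have hss : Finset.univ.filter (fun u => u ∈ S ∧ G.Adj w u) ⊂
      Finset.univ.filter (fun u => u ∈ S ∧ G.Adj w' u) := by
    rw [Finset.ssubset_iff_of_subset]
    · exact ⟨u1, by simp only [Finset.mem_filter]; exact ⟨Finset.mem_univ _, hu1S, hu1a⟩,
        by simp only [Finset.mem_filter]; rintro ⟨-, -, hn⟩; exact hu1n hn⟩
    · intro u hu
      simp only [Finset.mem_filter] at hu ⊢
      exact ⟨hu.1, hu.2.1, hsub u hu.2.1 hu.2.2⟩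
  have hlt : f w < f w' := Finset.card_lt_card hss
  omega

lemma exists_not_cornered {S : Set V} (hS : S.Nonempty) :
    ∃ x ∈ S, ¬ G.IsStrictCorner S x := by
  classical
  set f : V → ℕ := fun x => (Finset.univ.filter (fun u => u ∈ S ∧ G.Adj x u)).card with hf
  set T : Finset V := Finset.univ.filter (fun x => x ∈ S) with hT
  obtain ⟨x0, hx0⟩ := hS
  have hTne : T.Nonempty := ⟨x0, by rw [hT, Finset.mem_filter]; exact ⟨Finset.mem_univ _, hx0⟩⟩
  obtain ⟨x, hxT, hmax⟩ := T.exists_max_image f hTne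
  have hxS : x ∈ S := by have h1 := hxT; rw [hT, Finset.mem_filter] at h1; exact h1.2
  refine ⟨x, hxS, ?_⟩
  rintro ⟨w', hw'⟩
  obtain ⟨hw'S, -, hsub, u1, hu1S, hu1a, hu1n⟩ := hw'
  have hmem : w' ∈ T := by rw [hT, Finset.mem_filter]; exact ⟨Finset.mem_univ _, hw'S⟩
  have hle : f w' ≤ f x := hmax w' hmem
  have hss : Finset.univ.filter (fun u => u ∈ S ∧ G.Adj x u) ⊂
      Finset.univ.filter (fun u => u ∈ S ∧ G.Adj w' u) := by
    rw [Finset.ssubset_iff_of_subset]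
    · exact ⟨u1, by simp only [Finset.mem_filter]; exact ⟨Finset.mem_univ _, hu1S, hu1a⟩,
        by simp only [Finset.mem_filter]; rintro ⟨-, -, hn⟩; exact hu1n hn⟩
    · intro u hu
      simp only [Finset.mem_filter] at hu ⊢
      exact ⟨hu.1, hu.2.1, hsub u hu.2.1 hu.2.2⟩
  have hlt : f x < f w' := Finset.card_lt_card hss
  omega

lemma clique_top {α : ℕ} (hα2 : 2 ≤ α) (hub : ∀ v, G.cr v ≤ (α : ℕ∞)) {w : V}
    (hw : G.cr w = (α : ℕ∞)) : G.IsCliqueSet (G.lvl (α - 1)) := by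
  have hnc := G.no_clique_of_lt hub hw
  have hwS : w ∈ G.lvl (α - 1) := by
    refine G.mem_lvl_of_cr_ge (α - 1) ?_
    rw [hw]
    have h1 : ((α - 1 + 1 : ℕ) : ℕ∞) ≤ ((α : ℕ) : ℕ∞) := by exact_mod_cast by omega
    push_cast at h1; exact h1
  obtain ⟨x, hxS, hxnc⟩ := G.exists_not_cornered ⟨w, hwS⟩
  have hxge : ((α - 1 : ℕ) : ℕ∞) + 1 ≤ G.cr x := by
    by_contra hlt
    obtain ⟨i, hi, hci⟩ := G.exists_condAt_of_cr_lt (lt_of_not_ge hlt)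
    have him : i < α - 1 := by
      have h3 : ((i + 1 : ℕ) : ℕ∞) < ((α - 1 : ℕ) : ℕ∞) + 1 := by push_cast; exact hi
      have h4 : ((i + 1 : ℕ) : ℕ∞) < ((α - 1 + 1 : ℕ) : ℕ∞) := by push_cast; push_cast at h3; exact h3
      have h5 : (i + 1 : ℕ) < α - 1 + 1 := by exact_mod_cast h4
      omega
    rcases hci.2 with hcor | hclq
    · exact (G.lvl_subset (by omega : i + 1 ≤ α - 1) hxS).2 hcor
    · exact hnc i (by omega) hclq
  have hxcr : G.cr x = (α : ℕ∞) := by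
    refine le_antisymm (hub x) ?_
    have h1 : ((α - 1 + 1 : ℕ) : ℕ∞) ≤ G.cr x := by push_cast; push_cast at hxge; exact hxge
    have h2 : α - 1 + 1 = α := by omega
    rw [h2] at h1; exact h1
  have hxlt : G.cr x < (α : ℕ∞) + 1 := by
    rw [hxcr]
    exact (ENat.lt_add_one_iff (by exact_mod_cast (ENat.coe_ne_top α))).mpr le_rfl
  obtain ⟨j, hj, hcj⟩ := G.exists_condAt_of_cr_lt hxlt
  have hjle : j + 1 ≤ α := by
    have h3 : ((j + 1 : ℕ) : ℕ∞) < ((α + 1 : ℕ) : ℕ∞) := by push_cast; push_cast at hj; exact hj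
    have h4 : (j + 1 : ℕ) < α + 1 := by exact_mod_cast h3
    omega
  rcases Nat.lt_or_ge j (α - 1) with hjlt | hjge
  · exfalso
    rcases hcj.2 with hcor | hclq
    · exact (G.lvl_subset (by omega : j + 1 ≤ α - 1) hxS).2 hcor
    · exact hnc j (by omega) hclq
  · have hjeq : j = α - 1 := by omega
    subst hjeq
    rcases hcj.2 with hcor | hclq
    · exact absurd hcor hxnc
    · exact hclq

end Fintype

lemma fk_subset {k : ℕ} {u : V} : G.fk k u ⊆ G.GkSet (k + 1) := by
  intro w hw
  unfold fk at hw
  split at hw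
  · rename_i hlt
    rw [Set.mem_singleton_iff] at hw
    subst hw
    show ((k + 1 : ℕ) : ℕ∞) ≤ G.cr w
    push_cast
    exact (ENat.add_one_le_iff (ENat.coe_ne_top k)).mpr hlt
  · exact hw.1

lemma fk_dominates {k : ℕ} {u u' : V} (hu' : u' ∈ G.fk k u) :
    ∀ x ∈ G.GkSet k, G.Adj u x → G.Adj u' x := by
  unfold fk at hu'
  split at hu'
  · rw [Set.mem_singleton_iff] at hu'; subst hu'; exact fun x _ h => h
  · obtain ⟨-, -, -, hsub, -⟩ := hu'
    exact hsub

lemma fk_nonempty [Fintype V] {α k : ℕ} (hub : ∀ v, G.cr v ≤ (α : ℕ∞)) {w : V}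
    (hw : G.cr w = (α : ℕ∞)) (hk1 : 1 ≤ k) (hkα : k + 1 ≤ α)
    {u : V} (hu : u ∈ G.GkSet k) : (G.fk k u).Nonempty := by
  have hnc := G.no_clique_of_lt hub hw
  by_cases hlt : (k : ℕ∞) < G.cr u
  · exact ⟨u, by unfold fk; rw [if_pos hlt]; rfl⟩
  · obtain ⟨m, rfl⟩ : ∃ m, k = m + 1 := ⟨k - 1, by omega⟩
    have hum : u ∈ G.lvl m := by
      refine G.mem_lvl_of_cr_ge m ?_
      have h1 : ((m + 1 : ℕ) : ℕ∞) ≤ G.cr u := hu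
      push_cast at h1; exact h1
    have hcru : G.cr u < ((m + 1 : ℕ) : ℕ∞) + 1 :=
      lt_of_le_of_lt (not_lt.mp hlt)
        ((ENat.lt_add_one_iff (ENat.coe_ne_top (m + 1))).mpr le_rfl)
    obtain ⟨i, hi, hci⟩ := G.exists_condAt_of_cr_lt hcru
    have hile : i ≤ m := by
      have h3 : ((i + 1 : ℕ) : ℕ∞) < ((m + 2 : ℕ) : ℕ∞) := by push_cast; push_cast at hi; exact hi
      have h4 : (i + 1 : ℕ) < m + 2 := by exact_mod_cast h3
      omega
    have hieq : i = m := by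
      rcases Nat.lt_or_ge i m with hilt | hige
      · exfalso
        rcases hci.2 with hcor | hclq
        · exact (G.lvl_subset (by omega : i + 1 ≤ m) hum).2 hcor
        · exact hnc i (by omega) hclq
      · omega
    subst hieq
    have hcor : G.IsStrictCorner (G.lvl i) u := by
      rcases hci.2 with hcor | hclq
      · exact hcor
      · exact absurd hclq (hnc i (by omega))
    obtain ⟨w', hw', hw'nc⟩ := G.exists_not_cornered_superset hcor
    have hglvl : G.GkSet (i + 1) = G.lvl i :=
      G.GkSet_succ_eq_lvl (fun j hj => hnc j (by omega))
    have hglvl2 : G.GkSet (i + 1 + 1) = G.lvl (i + 1) :=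
      G.GkSet_succ_eq_lvl (fun j hj => hnc j (by omega))
    refine ⟨w', ?_⟩
    unfold fk
    rw [if_neg hlt]
    refine ⟨?_, ?_⟩
    · rw [hglvl2]
      exact ⟨hw'.1, hw'nc⟩
    · rw [hglvl]
      exact hw'

lemma Fk_subset : ∀ (k : ℕ) (v : V), G.Fk (k + 1) v ⊆ G.GkSet (k + 1)
  | 0, v => by
    intro x hx
    rw [show G.Fk 1 v = {v} from rfl, Set.mem_singleton_iff] at hx
    subst hx
    exact G.mem_GkSet_one _
  | k + 1, v => by
    intro x hx
    rw [show G.Fk (k + 2) v = ⋃ u ∈ G.Fk (k + 1) v, G.fk (k + 1) u from rfl] at hx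
    simp only [Set.mem_iUnion] at hx
    obtain ⟨u, hu, hx⟩ := hx
    exact G.fk_subset hx

lemma Fk_nonempty [Fintype V] {α : ℕ} (hub : ∀ v, G.cr v ≤ (α : ℕ∞)) {w : V}
    (hw : G.cr w = (α : ℕ∞)) :
    ∀ k : ℕ, k ≤ α → ∀ v : V, (G.Fk k v).Nonempty
  | 0, _, v => ⟨v, rfl⟩
  | 1, _, v => ⟨v, rfl⟩
  | k + 2, hk, v => by
    obtain ⟨u, hu⟩ := Fk_nonempty hub hw (k + 1) (by omega) v
    have huG : u ∈ G.GkSet (k + 1) := G.Fk_subset k v hu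
    obtain ⟨x, hx⟩ := G.fk_nonempty hub hw (by omega) (by omega) huG
    refine ⟨x, ?_⟩
    rw [show G.Fk (k + 2) v = ⋃ u ∈ G.Fk (k + 1) v, G.fk (k + 1) u from rfl]
    simp only [Set.mem_iUnion]
    exact ⟨u, hu, hx⟩

lemma Fk_adj : ∀ (k : ℕ) {r r₁ a b : V}, G.Adj r r₁ →
    a ∈ G.Fk k r → b ∈ G.Fk k r₁ → G.Adj a b
  | 0, r, r₁, a, b, h, ha, hb => by
    rw [show G.Fk 0 r = {r} from rfl, Set.mem_singleton_iff] at ha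
    rw [show G.Fk 0 r₁ = {r₁} from rfl, Set.mem_singleton_iff] at hb
    subst ha; subst hb; exact h
  | 1, r, r₁, a, b, h, ha, hb => by
    rw [show G.Fk 1 r = {r} from rfl, Set.mem_singleton_iff] at ha
    rw [show G.Fk 1 r₁ = {r₁} from rfl, Set.mem_singleton_iff] at hb
    subst ha; subst hb; exact h
  | k + 2, r, r₁, a, b, h, ha, hb => by
    rw [show G.Fk (k + 2) r = ⋃ u ∈ G.Fk (k + 1) r, G.fk (k + 1) u from rfl] at ha
    rw [show G.Fk (k + 2) r₁ = ⋃ u ∈ G.Fk (k + 1) r₁, G.fk (k + 1) u from rfl] at hb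
    simp only [Set.mem_iUnion] at ha hb
    obtain ⟨a0, ha0, ha⟩ := ha
    obtain ⟨b0, hb0, hb⟩ := hb
    have hadj : G.Adj a0 b0 := Fk_adj (k + 1) h ha0 hb0
    have hb0G : b0 ∈ G.GkSet (k + 1) := G.Fk_subset k r₁ hb0
    have h1 : G.Adj a b0 := G.fk_dominates ha b0 hb0G hadj
    have haG : a ∈ G.GkSet (k + 1) := G.GkSet_succ_subset _ (G.fk_subset ha)
    have h2 : G.Adj b a := G.fk_dominates hb a haG (G.symm _ _ h1)
    exact G.symm _ _ h2

lemma descent [Fintype V] {α : ℕ} (hub : ∀ v, G.cr v ≤ (α : ℕ∞)) {w : V}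
    (hw : G.cr w = (α : ℕ∞)) :
    ∀ k : ℕ, k + 1 ≤ α → ∀ c r : V, G.kCornered (k + 1) c r → ∀ r₁, G.Adj r r₁ →
      ∃ c₁, G.Adj c c₁ ∧ G.kCornered k c₁ r₁ := by
  intro k hk c r hc r₁ hr₁
  match k with
  | 0 =>
    obtain ⟨r', hr', H⟩ := hc
    rw [show G.Fk 1 r = {r} from rfl, Set.mem_singleton_iff] at hr'
    subst hr'
    have hadj : G.Adj c r₁ := H r₁ (Or.inl (G.mem_GkSet_one r₁)) hr₁
    exact ⟨r₁, hadj, rfl⟩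
  | j + 1 =>
    obtain ⟨r', hr', H⟩ := hc
    rw [show G.Fk (j + 2) r = ⋃ u ∈ G.Fk (j + 1) r, G.fk (j + 1) u from rfl] at hr'
    simp only [Set.mem_iUnion] at hr'
    obtain ⟨a, ha, hra⟩ := hr'
    obtain ⟨b, hb⟩ := G.Fk_nonempty hub hw (j + 1) (by omega) r₁
    have hab : G.Adj a b := G.Fk_adj (j + 1) hr₁ ha hb
    have hbk : b ∈ G.GkSet (j + 1) := G.Fk_subset j r₁ hb
    have hr'b : G.Adj r' b := G.fk_dominates hra b hbk hab
    obtain ⟨b', hb'⟩ := G.fk_nonempty hub hw (by omega) (by omega) hbk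
    have hb'k : b' ∈ G.GkSet (j + 1 + 1) := G.fk_subset hb'
    have hr'k : r' ∈ G.GkSet (j + 1) := G.GkSet_succ_subset _ (G.fk_subset hra)
    have hb'r' : G.Adj b' r' := G.fk_dominates hb' r' hr'k (G.symm _ _ hr'b)
    have hcb' : G.Adj c b' := H b' (Or.inl hb'k) (G.symm _ _ hb'r')
    refine ⟨b', hcb', b, hb, ?_⟩
    intro u hu hbu
    rcases hu with hu | rfl
    · exact G.fk_dominates hb' u hu hbu
    · exact G.refl _

lemma winWithin_of_kCornered [Fintype V] {α : ℕ} (hub : ∀ v, G.cr v ≤ (α : ℕ∞)) {w : V}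
    (hw : G.cr w = (α : ℕ∞)) :
    ∀ k : ℕ, k ≤ α → ∀ c r : V, G.kCornered k c r → G.WinWithin k c r
  | 0, _, c, r, h => h
  | k + 1, hk, c, r, h => by
    refine Or.inr fun r₁ hr₁ => ?_
    obtain ⟨c₁, hadj, hc₁⟩ := G.descent hub hw k hk c r h r₁ hr₁
    exact ⟨c₁, hadj, winWithin_of_kCornered hub hw k (by omega) c₁ r₁ hc₁⟩

lemma canCatch_of_winWithin_aux :
    ∀ (n : ℕ) (c r : V), G.WinWithin n c r →
      c = r ∨ ∀ r', G.Adj r r' → G.CanCatch n c r'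
  | 0, c, r, h => Or.inl h
  | n + 1, c, r, h => by
    rcases h with h | h
    · exact Or.inl h
    · refine Or.inr fun r' hr' => ?_
      obtain ⟨c₁, hc₁, hwin⟩ := h r' hr'
      refine Or.inr ⟨c₁, hc₁, ?_⟩
      rcases canCatch_of_winWithin_aux n c₁ r' hwin with h2 | h2
      · exact Or.inl h2
      · exact Or.inr h2

lemma canCatch_of_winWithin (n : ℕ) (c r : V) (h : G.WinWithin n c r) :
    G.CanCatch n c r := by
  rcases G.canCatch_of_winWithin_aux n c r h with rfl | h2
  · cases n with
    | zero => rfl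
    | succ n => exact Or.inl rfl
  · exact h2 r (G.refl r)

end RefGraph

/-- If `G` is an `r`-cop-win graph (`r ∈ {0,1}`) with finite
corner rank `α ≥ 2`, then `G` is cop-win and `capt(G) ≤ α - r`. -/
theorem capture_time_upper_bound
    {V : Type*} [Fintype V] [Nonempty V] (G : RefGraph V)
    (α r : ℕ) (hα2 : 2 ≤ α) (hα : G.crGraph = (α : ℕ∞))
    (hr : G.RCopWin r α) :
    G.CopWin ∧ G.capt ≤ α - r := by
  classical
  have hub : ∀ v, G.cr v ≤ (α : ℕ∞) := by
    intro v
    have h1 : G.cr v ≤ G.crGraph := Finset.le_sup (Finset.mem_univ v)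
    rw [hα] at h1; exact h1
  obtain ⟨w, -, hw0⟩ := Finset.exists_mem_eq_sup Finset.univ Finset.univ_nonempty
    (fun v => G.cr v)
  have hw : G.cr w = (α : ℕ∞) := by
    rw [← hα]; exact hw0.symm
  obtain ⟨β, rfl⟩ : ∃ β, α = β + 2 := ⟨α - 2, by omega⟩
  have key : ∃ c₀, ∀ r₀, G.CanCatch (β + 2 - r) c₀ r₀ := by
    have hr' : (r = 1 ∧ G.OneCopWin (β + 2)) ∨ (r = 0 ∧ ¬ G.OneCopWin (β + 2)) := hr
    rcases hr' with ⟨rfl, hone⟩ | ⟨rfl, -⟩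
    · -- r = 1
      obtain ⟨x, hx1, hx2⟩ : ∃ x, G.cr x = ((β + 2 : ℕ) : ℕ∞) ∧
          ∀ u, ((β + 2 - 1 : ℕ) : ℕ∞) ≤ G.cr u → G.Adj x u := hone
      refine ⟨x, fun r₀ => ?_⟩
      apply G.canCatch_of_winWithin
      rw [show β + 2 - 1 = β + 1 from rfl]
      apply G.winWithin_of_kCornered hub hw (β + 1) (by omega)
      obtain ⟨r', hr'⟩ := G.Fk_nonempty hub hw (β + 1) (by omega) r₀
      refine ⟨r', hr', fun u hu hadj => ?_⟩
      rcases hu with hu | rfl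
      · exact hx2 u hu
      · exact G.refl _
    · -- r = 0
      have hclq : G.IsCliqueSet (G.lvl (β + 1)) := by
        have := G.clique_top hα2 hub hw
        rwa [show β + 2 - 1 = β + 1 from rfl] at this
      have hnc := G.no_clique_of_lt hub hw
      have hS : G.GkSet (β + 2) = G.lvl (β + 1) :=
        G.GkSet_succ_eq_lvl (fun j hj => hnc j (by omega))
      have hwS : w ∈ G.lvl (β + 1) := by
        rw [← hS]
        show ((β + 2 : ℕ) : ℕ∞) ≤ G.cr w
        rw [hw]
      refine ⟨w, fun r₀ => ?_⟩
      apply G.canCatch_of_winWithin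
      rw [show β + 2 - 0 = β + 2 from rfl]
      apply G.winWithin_of_kCornered hub hw (β + 2) le_rfl
      obtain ⟨r', hr'⟩ := G.Fk_nonempty hub hw (β + 2) le_rfl r₀
      refine ⟨r', hr', fun u hu hadj => ?_⟩
      rcases hu with hu | rfl
      · exact hclq w hwS u (hS ▸ hu)
      · exact G.refl _
  obtain ⟨c₀, hc₀⟩ := key
  exact ⟨⟨β + 2 - r, c₀, hc₀⟩, Nat.sInf_le ⟨c₀, hc₀⟩⟩
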